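/- For every policy π and every state s ∈ S, the value function satisfies the Bellman consistency equation: V_M^π(s) = ∫_A ( r(s,a) + γ ∫_S V_M^π(s') dT(s'|s,a) ) dπ(a|s). -/

import Mathlib

/-!
Formalization of an MDP `M = (S, A, T, r, μ₀, γ)`: measurable state space `S`, measurable
action space `A`, Markov transition kernel `T : Kernel (S × A) S`, bounded measurable reward
`r : S × A → ℝ`, initial distribution `μ₀`, discount `γ ∈ [0,1)`.  A policy is a Markov kernel
`π : Kernel S A`.  The trajectory distribution generated by `(μ₀, π, T)` via the
Ionescu–Tulcea construction has time-`t` state-action marginal given by iterating the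
one-step kernel; the value function `V_M^π` and expected return `η_M(π)` are expressed through
these marginals via `V_M^π(s) = ∑_t γ^t E[r(s_t, a_t)]` (Fubini applied to the discounted sum).
-/

open MeasureTheory ProbabilityTheory

variable {S A : Type*} [MeasurableSpace S] [MeasurableSpace A]

/-- Kernel sending a state `s` to the distribution of the pair `(s, a)` with `a ~ π(·|s)`. -/
noncomputable def stateAction (π : Kernel S A) [IsSFiniteKernel π] :
    Kernel S (S × A) :=
  Kernel.id ×ₖ π

/-- One step of the state-action Markov chain: from `(s, a)`, sample `s' ~ T(·|s, a)` and then
`a' ~ π(·|s')`. -/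
noncomputable def saStep (π : Kernel S A) [IsSFiniteKernel π] (T : Kernel (S × A) S) :
    Kernel (S × A) (S × A) :=
  (stateAction π) ∘ₖ T

/-- Distribution of the state-action pair `(s_t, a_t)` at time `t` as a kernel from the initial
state `s₀ = s`, for the Markov chain generated by policy `π` and dynamics `T` (the time-`t`
marginal of the Ionescu–Tulcea trajectory distribution with `a_t ~ π(·|s_t)`,
`s_{t+1} ~ T(·|s_t, a_t)`). -/
noncomputable def saDist (π : Kernel S A) [IsSFiniteKernel π] (T : Kernel (S × A) S) :
    ℕ → Kernel S (S × A)
  | 0 => stateAction π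
  | (n + 1) => (saStep π T) ∘ₖ saDist π T n

/-- The value function `V_M^π(s) = E[∑_t γ^t r(s_t, a_t)]` for trajectories started at `s`
under `(π, T)`. -/
noncomputable def value (π : Kernel S A) [IsSFiniteKernel π] (T : Kernel (S × A) S)
    (r : S × A → ℝ) (γ : ℝ) (s : S) : ℝ :=
  ∑' t : ℕ, γ ^ t * ∫ x, r x ∂(saDist π T t s)

/-- The expected return `η_M(π) = E_{s ~ μ₀}[V_M^π(s)]`. -/
noncomputable def expReturn (μ₀ : Measure S) (π : Kernel S A) [IsSFiniteKernel π]
    (T : Kernel (S × A) S) (r : S × A → ℝ) (γ : ℝ) : ℝ :=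
  ∫ s, value π T r γ s ∂μ₀

/-- The discounted expected uncertainty `ε_u(π) = ∑_t γ^t E_{T,μ₀}^π[u(s_t, a_t)]` over
trajectories generated by `(μ₀, π, T)`. -/
noncomputable def epsU (μ₀ : Measure S) (π : Kernel S A) [IsSFiniteKernel π]
    (T : Kernel (S × A) S) (u : S × A → ℝ) (γ : ℝ) : ℝ :=
  ∑' t : ℕ, γ ^ t * ∫ x, u x ∂(μ₀.bind (fun s => saDist π T t s))

/-!
Write `g t s` (`expectedReward`) for the expected reward at time `t` from `s₀ = s`.
Conditioning on the first state-action pair shifts the chain by one step: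
`g (t+1) s = ∫ g t d(P s)`, where `P = T ∘ₖ (id ×ₖ π)` is the state transition kernel under `π`.
Splitting off the `t = 0` term of `V = ∑ γ^t g t` and pulling the discounted sum through
`∫ · d(P s)` gives `V s = ∫ r d(id ×ₖ π) s + γ ∫ V d(P s)`, which is the claim after integrating
out `a`. Every interchange of sum and integral is justified by the bound `|γ^t g t| ≤ C γ^t`.
-/

section Integration

variable {α β : Type*} [MeasurableSpace α] [MeasurableSpace β]

lemma abs_integral_le_of_abs_le {μ : Measure α} [IsProbabilityMeasure μ] {f : α → ℝ} {C : ℝ}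
    (hf : ∀ x, |f x| ≤ C) : |∫ x, f x ∂μ| ≤ C := by
  simpa using norm_integral_le_of_norm_le_const (μ := μ) (f := f)
    (.of_forall fun x => (Real.norm_eq_abs _).trans_le (hf x))

lemma integrable_of_abs_le {μ : Measure α} [IsFiniteMeasure μ] {f : α → ℝ} (hf : Measurable f)
    {C : ℝ} (hfC : ∀ x, |f x| ≤ C) : Integrable f μ :=
  .of_bound hf.aestronglyMeasurable C (.of_forall hfC)

lemma ProbabilityTheory.Kernel.integral_comp_of_abs_le {E : Type*} [MeasurableSpace E]
    (κ : Kernel α β) [IsFiniteKernel κ] (η : Kernel β E) [IsFiniteKernel η] (a : α) {f : E → ℝ}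
    (hf : Measurable f) {C : ℝ} (hfC : ∀ x, |f x| ≤ C) :
    ∫ x, f x ∂(η ∘ₖ κ) a = ∫ y, ∫ x, f x ∂η y ∂κ a :=
  Kernel.integral_comp (integrable_of_abs_le hf hfC)

lemma integral_tsum_of_norm_le {E : Type*} [NormedAddCommGroup E] [NormedSpace ℝ E]
    {μ : Measure α} [IsFiniteMeasure μ] {f : ℕ → α → E} (hf : ∀ n, AEStronglyMeasurable (f n) μ)
    {c : ℕ → ℝ} (hc : Summable c) (hfc : ∀ n x, ‖f n x‖ ≤ c n) :
    ∫ x, ∑' n, f n x ∂μ = ∑' n, ∫ x, f n x ∂μ := by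
  have hint (n : ℕ) : Integrable (f n) μ := .of_bound (hf n) (c n) (.of_forall (hfc n))
  refine (integral_tsum_of_summable_integral_norm hint ?_).symm
  refine (hc.mul_right (μ.real Set.univ)).of_nonneg_of_le
    (fun n => integral_nonneg fun _ => norm_nonneg _) fun n => ?_
  calc ∫ x, ‖f n x‖ ∂μ ≤ ∫ _, c n ∂μ := integral_mono (hint n).norm (integrable_const _) (hfc n)
    _ = c n * μ.real Set.univ := by rw [integral_const, smul_eq_mul, mul_comm]

end Integration

lemma norm_pow_mul_le {γ C x : ℝ} {n : ℕ} (hγ : 0 ≤ γ) (hx : |x| ≤ C) :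
    ‖γ ^ n * x‖ ≤ C * γ ^ n := by
  rw [Real.norm_eq_abs, abs_mul, abs_pow, abs_of_nonneg hγ, mul_comm]
  exact mul_le_mul_of_nonneg_right hx (pow_nonneg hγ n)

instance stateAction.isMarkovKernel (π : Kernel S A) [IsMarkovKernel π] :
    IsMarkovKernel (stateAction π) := by
  unfold stateAction; infer_instance

instance saDist.isMarkovKernel (π : Kernel S A) [IsMarkovKernel π] (T : Kernel (S × A) S)
    [IsMarkovKernel T] (n : ℕ) : IsMarkovKernel (saDist π T n) := by
  induction n with
  | zero => exact stateAction.isMarkovKernel π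
  | succ => unfold saDist saStep; infer_instance

lemma saDist_succ (π : Kernel S A) [IsSFiniteKernel π] (T : Kernel (S × A) S) (n : ℕ) :
    saDist π T (n + 1) = saDist π T n ∘ₖ (T ∘ₖ stateAction π) := by
  induction n with
  | zero => exact Kernel.comp_assoc _ _ _
  | succ n ih =>
    change saStep π T ∘ₖ saDist π T (n + 1) = (saStep π T ∘ₖ saDist π T n) ∘ₖ _
    rw [ih, Kernel.comp_assoc]

lemma integral_stateAction (π : Kernel S A) [IsSFiniteKernel π] (s : S) {f : S × A → ℝ}
    (hf : Measurable f) : ∫ x, f x ∂(stateAction π s) = ∫ a, f (s, a) ∂(π s) := by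
  rw [stateAction, Kernel.prod_apply, Kernel.id_apply, Measure.dirac_prod,
    integral_map measurable_prodMk_left.aemeasurable hf.aestronglyMeasurable]

noncomputable def expectedReward (π : Kernel S A) [IsSFiniteKernel π] (T : Kernel (S × A) S)
    (r : S × A → ℝ) (t : ℕ) (s : S) : ℝ :=
  ∫ x, r x ∂(saDist π T t s)

lemma measurable_expectedReward (π : Kernel S A) [IsSFiniteKernel π] (T : Kernel (S × A) S)
    {r : S × A → ℝ} (hr : Measurable r) (t : ℕ) : Measurable (expectedReward π T r t) :=
  (hr.stronglyMeasurable.integral_kernel (κ := saDist π T t)).measurable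

section Value

variable (π : Kernel S A) [IsMarkovKernel π] (T : Kernel (S × A) S) [IsMarkovKernel T]
  {r : S × A → ℝ} {C γ : ℝ}

lemma abs_expectedReward_le (hr : ∀ x, |r x| ≤ C) (t : ℕ) (s : S) :
    |expectedReward π T r t s| ≤ C :=
  abs_integral_le_of_abs_le hr

lemma expectedReward_succ (hr : Measurable r) (hrC : ∀ x, |r x| ≤ C) (t : ℕ) (s : S) :
    expectedReward π T r (t + 1) s =
      ∫ s', expectedReward π T r t s' ∂(T ∘ₖ stateAction π) s := by
  rw [expectedReward, saDist_succ, Kernel.integral_comp_of_abs_le _ _ _ hr hrC]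
  rfl

lemma summable_discounted_expectedReward (hrC : ∀ x, |r x| ≤ C) (hγ0 : 0 ≤ γ) (hγ1 : γ < 1)
    (s : S) : Summable fun t => γ ^ t * expectedReward π T r t s :=
  .of_norm_bounded ((summable_geometric_of_lt_one hγ0 hγ1).mul_left C)
    (norm_pow_mul_le hγ0 <| abs_expectedReward_le π T hrC · s)

lemma measurable_value (hr : Measurable r) (hrC : ∀ x, |r x| ≤ C) (hγ0 : 0 ≤ γ) (hγ1 : γ < 1) :
    Measurable (value π T r γ) :=
  measurable_of_tendsto_metrizable
    (fun _ => Finset.measurable_sum _ fun t _ => (measurable_expectedReward π T hr t).const_mul _)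
    (tendsto_pi_nhds.2 fun s =>
      (summable_discounted_expectedReward π T hrC hγ0 hγ1 s).hasSum.tendsto_sum_nat)

lemma abs_value_le (hrC : ∀ x, |r x| ≤ C) (hγ0 : 0 ≤ γ) (hγ1 : γ < 1) (s : S) :
    |value π T r γ s| ≤ C * (1 - γ)⁻¹ :=
  tsum_of_norm_bounded ((hasSum_geometric_of_lt_one hγ0 hγ1).mul_left C)
    (norm_pow_mul_le hγ0 <| abs_expectedReward_le π T hrC · s)

lemma integral_value (hr : Measurable r) (hrC : ∀ x, |r x| ≤ C) (hγ0 : 0 ≤ γ) (hγ1 : γ < 1)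
    (μ : Measure S) [IsProbabilityMeasure μ] :
    ∫ s, value π T r γ s ∂μ = ∑' t, γ ^ t * ∫ s, expectedReward π T r t s ∂μ := by
  simp_rw [← integral_const_mul]
  exact integral_tsum_of_norm_le
    (fun t => ((measurable_expectedReward π T hr t).const_mul _).aestronglyMeasurable)
    ((summable_geometric_of_lt_one hγ0 hγ1).mul_left C)
    (fun t s => norm_pow_mul_le hγ0 (abs_expectedReward_le π T hrC t s))

lemma value_eq_add_tsum (hrC : ∀ x, |r x| ≤ C) (hγ0 : 0 ≤ γ) (hγ1 : γ < 1) (s : S) :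
    value π T r γ s =
      expectedReward π T r 0 s + γ * ∑' t, γ ^ t * expectedReward π T r (t + 1) s := by
  refine (summable_discounted_expectedReward π T hrC hγ0 hγ1 s).tsum_eq_zero_add.trans ?_
  rw [← tsum_mul_left, pow_zero, one_mul]
  exact congrArg _ (tsum_congr fun t => by ring)

end Value

theorem bellman_consistency
    (T : Kernel (S × A) S) [IsMarkovKernel T] (π : Kernel S A) [IsMarkovKernel π]
    (r : S × A → ℝ) (hr_meas : Measurable r) (C : ℝ) (hr_bdd : ∀ x, |r x| ≤ C)
    (γ : ℝ) (hγ0 : 0 ≤ γ) (hγ1 : γ < 1) (s : S) :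
    value π T r γ s
      = ∫ a, (r (s, a) + γ * ∫ s', value π T r γ s' ∂(T (s, a))) ∂(π s) := by
  have hV : Measurable (value π T r γ) := measurable_value π T hr_meas hr_bdd hγ0 hγ1
  have hV_next : Measurable fun x => ∫ s', value π T r γ s' ∂(T x) :=
    (hV.stronglyMeasurable.integral_kernel (κ := T)).measurable
  have hV_next_bdd (x : S × A) : |∫ s', value π T r γ s' ∂(T x)| ≤ C * (1 - γ)⁻¹ :=
    abs_integral_le_of_abs_le (abs_value_le π T hr_bdd hγ0 hγ1)
  calc value π T r γ s
      = expectedReward π T r 0 s + γ * ∑' t, γ ^ t * expectedReward π T r (t + 1) s :=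
        value_eq_add_tsum π T hr_bdd hγ0 hγ1 s
    _ = ∫ x, r x ∂(stateAction π s)
          + γ * ∫ x, ∫ s', value π T r γ s' ∂(T x) ∂(stateAction π s) := by
        simp_rw [expectedReward_succ π T hr_meas hr_bdd]
        rw [← integral_value π T hr_meas hr_bdd hγ0 hγ1,
          Kernel.integral_comp_of_abs_le _ _ _ hV (abs_value_le π T hr_bdd hγ0 hγ1)]
        rfl
    _ = ∫ x, (r x + γ * ∫ s', value π T r γ s' ∂(T x)) ∂(stateAction π s) := by
        rw [integral_add (integrable_of_abs_le hr_meas hr_bdd)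
          ((integrable_of_abs_le hV_next hV_next_bdd).const_mul γ), integral_const_mul]
    _ = _ := integral_stateAction π s (hr_meas.add (hV_next.const_mul γ))
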